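/- arXiv:1104.2113 — 2 statements merged into one kernel-verified Lean document; each statement's English description precedes it below -/
import Mathlib

section
/- Expanding along the last row, the Izergin determinant satisfies: Z̆_N(v;w) = ∑_{j=1}^N Z̆_{N-1}(v_1,…,v_{N-1}; w_1,…,ŵ_j,…,w_N) · [γ] ∏_{k=1}^{N-1}[v_k-w_j+γ][v_k-w_j] · ∏_{k≠j}^N [v_N-w_k+γ][v_N-w_k] / ( ∏_{k=1}^{N-1}[v_k-v_N] ∏_{k≠j}^N [w_j-w_k] ), where ŵ_j denotes omission of w_j. -/
open Finset

/-- The Izergin function, in the determinant form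
`det([γ]∏_{k≠i}[v_k-w_j+γ][v_k-w_j]) / ∏_{i<j}[v_i-v_j][w_j-w_i]`. -/
noncomputable def izerginDet (γ : ℂ) {N : ℕ} (v w : Fin N → ℂ) : ℂ :=
  Matrix.det (Matrix.of fun i j : Fin N =>
      Complex.sinh γ *
        ∏ k ∈ Finset.univ.erase i, (Complex.sinh (v k - w j + γ) * Complex.sinh (v k - w j))) /
  ((∏ i, ∏ j ∈ Ioi i, Complex.sinh (v i - v j)) *
   (∏ i, ∏ j ∈ Ioi i, Complex.sinh (w j - w i)))

/-!
Laplace expansion along the last row. Deleting row `N` and column `j`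
of the Izergin matrix leaves the Izergin matrix of `(v₁,…,v_{N-1}; w₁,…,ŵ_j,…,w_N)` with column
`k` scaled by `[v_N-w_k+γ][v_N-w_k]`, because every entry of that column contains the `v_N` factor
once. The two double products in the denominator split off the pairs containing `v_N`,
respectively `w_j`; turning `∏_{k>j}[w_k-w_j]` into `∏_{k>j}[w_j-w_k]` costs `(-1)^(N-j)`, which
is exactly the cofactor sign `(-1)^(N+j)`.
-/

namespace Fin

variable {M : Type*} [CommMonoid M] {n : ℕ}

theorem prod_filter_univ_succAbove (p : Fin (n + 1)) (P : Fin (n + 1) → Prop) [DecidablePred P]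
    (f : Fin (n + 1) → M) :
    ∏ j ∈ univ.filter P, f j =
      (if P p then f p else 1) *
        ∏ j ∈ univ.filter (fun i => P (p.succAbove i)), f (p.succAbove j) := by
  rw [prod_filter, prod_filter, prod_univ_succAbove _ p]

theorem prod_univ_erase (p : Fin (n + 1)) (f : Fin (n + 1) → M) :
    ∏ k ∈ univ.erase p, f k = ∏ k : Fin n, f (p.succAbove k) := by
  simp [← filter_ne', prod_filter_univ_succAbove p, succAbove_ne]

theorem prod_univ_erase_succAbove (p : Fin (n + 1)) (i : Fin n) (f : Fin (n + 1) → M) :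
    ∏ k ∈ univ.erase (p.succAbove i), f k = f p * ∏ k ∈ univ.erase i, f (p.succAbove k) := by
  simp [← filter_ne', prod_filter_univ_succAbove p, ne_succAbove]

theorem prod_Ioi_succAbove (p : Fin (n + 1)) (i : Fin n) (f : Fin (n + 1) → M) :
    ∏ j ∈ Ioi (p.succAbove i), f j =
      (if p.succAbove i < p then f p else 1) * ∏ j ∈ Ioi i, f (p.succAbove j) := by
  simp only [← filter_lt_eq_Ioi, prod_filter_univ_succAbove p, succAbove_lt_succAbove_iff]

theorem prod_Iio_eq_prod_ite_succAbove (p : Fin (n + 1)) (f : Fin (n + 1) → M) :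
    ∏ k ∈ Iio p, f k = ∏ i : Fin n, if p.succAbove i < p then f (p.succAbove i) else 1 := by
  rw [← filter_gt_eq_Iio, prod_filter_univ_succAbove p, if_neg (lt_irrefl p), one_mul, prod_filter]

theorem prod_prod_Ioi_succAbove (p : Fin (n + 1)) (g : Fin (n + 1) → Fin (n + 1) → M) :
    ∏ i, ∏ j ∈ Ioi i, g i j =
      (∏ i : Fin n, ∏ j ∈ Ioi i, g (p.succAbove i) (p.succAbove j)) *
        ((∏ k ∈ Iio p, g k p) * ∏ k ∈ Ioi p, g p k) := by
  simp only [prod_univ_succAbove _ p, prod_Ioi_succAbove, prod_mul_distrib,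
    prod_Iio_eq_prod_ite_succAbove p (g · p)]
  ac_rfl

theorem prod_Iio_mul_prod_Ioi_neg {R : Type*} [CommRing R] (p : Fin (n + 1))
    (f : Fin (n + 1) → R) :
    (∏ k ∈ Iio p, f k) * ∏ k ∈ Ioi p, -f k = (-1) ^ (n - p) * ∏ k ∈ univ.erase p, f k := by
  rw [prod_neg, card_Ioi, ← compl_singleton, ← Ioi_disjUnion_Iio, prod_disjUnion,
    Nat.add_sub_cancel]
  ring

end Fin

open Complex

noncomputable def izerginMatrix (γ : ℂ) {N : ℕ} (v w : Fin N → ℂ) : Matrix (Fin N) (Fin N) ℂ :=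
  Matrix.of fun i j => sinh γ * ∏ k ∈ univ.erase i, (sinh (v k - w j + γ) * sinh (v k - w j))

section

variable (γ : ℂ) {N : ℕ}

theorem izerginDet_eq (v w : Fin N → ℂ) :
    izerginDet γ v w = (izerginMatrix γ v w).det /
      ((∏ i, ∏ j ∈ Ioi i, sinh (v i - v j)) * ∏ i, ∏ j ∈ Ioi i, sinh (w j - w i)) :=
  rfl

theorem izerginMatrix_apply_eq_prod_succAbove (v w : Fin (N + 1) → ℂ) (p q : Fin (N + 1)) :
    izerginMatrix γ v w p q =
      sinh γ * ∏ k : Fin N, sinh (v (p.succAbove k) - w q + γ) * sinh (v (p.succAbove k) - w q) := by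
  rw [izerginMatrix, Matrix.of_apply, Fin.prod_univ_erase]

theorem izerginMatrix_submatrix_succAbove (v w : Fin (N + 1) → ℂ) (p q : Fin (N + 1)) :
    (izerginMatrix γ v w).submatrix p.succAbove q.succAbove =
      Matrix.of fun i j => sinh (v p - w (q.succAbove j) + γ) * sinh (v p - w (q.succAbove j)) *
        izerginMatrix γ (v ∘ p.succAbove) (w ∘ q.succAbove) i j := by
  ext i j
  simp only [izerginMatrix, Matrix.submatrix_apply, Matrix.of_apply,
    Fin.prod_univ_erase_succAbove, Function.comp_apply]
  ring

theorem det_izerginMatrix_submatrix_succAbove (v w : Fin (N + 1) → ℂ) (p q : Fin (N + 1)) :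
    ((izerginMatrix γ v w).submatrix p.succAbove q.succAbove).det =
      (∏ k ∈ univ.erase q, sinh (v p - w k + γ) * sinh (v p - w k)) *
        (izerginMatrix γ (v ∘ p.succAbove) (w ∘ q.succAbove)).det := by
  rw [izerginMatrix_submatrix_succAbove, Matrix.det_mul_row, Fin.prod_univ_erase q]

theorem prod_prod_Ioi_sinh_sub_last (v : Fin (N + 1) → ℂ) :
    ∏ i, ∏ j ∈ Ioi i, sinh (v i - v j) =
      (∏ i : Fin N, ∏ j ∈ Ioi i, sinh (v i.castSucc - v j.castSucc)) *
        ∏ k : Fin N, sinh (v k.castSucc - v (Fin.last N)) := by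
  have hIoi : Ioi (Fin.last N) = ∅ := Ioi_eq_empty.2 fun b _ => Fin.le_last b
  simp [Fin.prod_prod_Ioi_succAbove (Fin.last N), hIoi]

theorem prod_prod_Ioi_sinh_sub_succAbove (w : Fin (N + 1) → ℂ) (p : Fin (N + 1)) :
    ∏ i, ∏ j ∈ Ioi i, sinh (w j - w i) =
      (∏ i : Fin N, ∏ j ∈ Ioi i, sinh (w (p.succAbove j) - w (p.succAbove i))) *
        ((-1) ^ (N - p) * ∏ k ∈ univ.erase p, sinh (w p - w k)) := by
  rw [Fin.prod_prod_Ioi_succAbove p, ← Fin.prod_Iio_mul_prod_Ioi_neg]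
  simp only [← sinh_neg, neg_sub]

end

theorem izergin_laplace_expansion_general (γ : ℂ) {N : ℕ} (v w : Fin (N + 1) → ℂ) :
    izerginDet γ v w =
      ∑ j : Fin (N + 1),
        izerginDet γ (v ∘ Fin.castSucc) (w ∘ j.succAbove) *
          (Complex.sinh γ *
            (∏ k : Fin N, Complex.sinh (v k.castSucc - w j + γ) *
              Complex.sinh (v k.castSucc - w j)) *
            ∏ k ∈ Finset.univ.erase j, Complex.sinh (v (Fin.last N) - w k + γ) *
              Complex.sinh (v (Fin.last N) - w k)) /
          ((∏ k : Fin N, Complex.sinh (v k.castSucc - v (Fin.last N))) *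
            ∏ k ∈ Finset.univ.erase j, Complex.sinh (w j - w k)) := by
  rw [izerginDet_eq, Matrix.det_succ_row _ (Fin.last N), sum_div]
  refine sum_congr rfl fun j _ => ?_
  rw [det_izerginMatrix_submatrix_succAbove, izerginMatrix_apply_eq_prod_succAbove,
    izerginDet_eq, prod_prod_Ioi_sinh_sub_last, prod_prod_Ioi_sinh_sub_succAbove w j,
    Fin.succAbove_last, Fin.val_last]
  have hsign : (-1 : ℂ) ^ (N + j : ℕ) = (-1) ^ (N - j : ℕ) := by
    rw [show N + j = N - j + 2 * j by omega, pow_add, pow_mul, neg_one_sq, one_pow, mul_one]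
  have hsign_ne : (-1 : ℂ) ^ (N - j : ℕ) ≠ 0 := by simp
  rw [hsign]
  simp only [Function.comp_apply]
  field_simp

/-- Expansion of the Izergin determinant along its last row. -/
theorem izergin_laplace_expansion (γ : ℂ) {N : ℕ} (v w : Fin (N + 1) → ℂ)
    (hvv : ∀ i j, i ≠ j → Complex.sinh (v i - v j) ≠ 0)
    (hww : ∀ i j, i ≠ j → Complex.sinh (w i - w j) ≠ 0) :
    izerginDet γ v w =
      ∑ j : Fin (N + 1),
        izerginDet γ (v ∘ Fin.castSucc) (w ∘ j.succAbove) *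
          (Complex.sinh γ *
            (∏ k : Fin N, Complex.sinh (v k.castSucc - w j + γ) *
              Complex.sinh (v k.castSucc - w j)) *
            ∏ k ∈ Finset.univ.erase j, Complex.sinh (v (Fin.last N) - w k + γ) *
              Complex.sinh (v (Fin.last N) - w k)) /
          ((∏ k : Fin N, Complex.sinh (v k.castSucc - v (Fin.last N))) *
            ∏ k ∈ Finset.univ.erase j, Complex.sinh (w j - w k)) :=
  izergin_laplace_expansion_general γ v w
end

section
/- The determinant expression S_n = ∏_{i=1}^N ∏_{j=1}^M [v_i-w_j] · det M_n / ( ∏_{i=1}^n ∏_{j=1}^{N-n} [u_i-w_j] · ∏_{1≤i<j≤n}[u_i-u_j] · ∏_{1≤i<j≤N}[v_i-v_j] · ∏_{1≤i<j≤N-n}[w_j-w_i] ) satisfies the recursion: setting u_n = w_{N-n+1} gives S_n = ∏_{i=1}^M [w_{N-n+1}-w_i+γ] · S_{n-1}, where S_{n-1} is the same formula with n replaced by n-1. -/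
/-!
At `u_n = w_{Ñ+1}` the second product in `g_i(u_n)` contains the factor `[w_{Ñ+1} - w_{Ñ+1}] = 0`,
so the column `g(u_n)` of `M_n` is `∏_k [w_{Ñ+1} - w_k + γ]` times the column `f(w_{Ñ+1})`.
Pulling this factor out of the determinant leaves exactly `M_{n-1}`. In the denominator, the
point `u_n = w_{Ñ+1}` merely moves from the `u`-list to the end of the `w`-list, and the
`u`-`w` cross product together with the two Vandermonde-type products is unchanged by that move.
-/

open Finset

/-- The function `f_i(x) = ([γ]/[v_i-x]) ∏_{k≠i} [v_k-x+γ]`. -/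
noncomputable def fXXZ (γ : ℂ) {N : ℕ} (v : Fin N → ℂ) (i : Fin N) (x : ℂ) : ℂ :=
  Complex.sinh γ / Complex.sinh (v i - x) *
    ∏ k ∈ Finset.univ.erase i, Complex.sinh (v k - x + γ)

/-- The function
`g_i(u) = ([γ]/[v_i-u]) (∏_{k≠i}[v_k-u+γ]∏_k[u-w_k+γ] − ∏_{k≠i}[v_k-u-γ]∏_k[u-w_k])`. -/
noncomputable def gXXZ (γ : ℂ) {N M : ℕ} (v : Fin N → ℂ) (w : Fin M → ℂ)
    (i : Fin N) (x : ℂ) : ℂ :=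
  Complex.sinh γ / Complex.sinh (v i - x) *
    ((∏ k ∈ Finset.univ.erase i, Complex.sinh (v k - x + γ)) *
      (∏ k, Complex.sinh (x - w k + γ)) -
     (∏ k ∈ Finset.univ.erase i, Complex.sinh (v k - x - γ)) *
      (∏ k, Complex.sinh (x - w k)))

/-- The determinant expression for the intermediate Bethe scalar product `S_n`:
`S_n = ∏_{i,j}[v_i-w_j]·det M_n / (∏∏[u_i-w_j]·∏[u_i-u_j]·∏[v_i-v_j]·∏[w_j-w_i])`,
where the `N×N` matrix `M_n` has columns `f(w_1),…,f(w_{N-n}),g(u_n),…,g(u_1)`. -/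
noncomputable def SXXZ (γ : ℂ) {N M n : ℕ} (v : Fin N → ℂ) (w : Fin M → ℂ)
    (u : Fin n → ℂ) (hn : n ≤ N) (hNM : N ≤ M) : ℂ :=
  (∏ i, ∏ j, Complex.sinh (v i - w j)) *
    Matrix.det (Matrix.of fun i j : Fin N =>
      if h : (j : ℕ) < N - n then
        fXXZ γ v i (w ⟨j, by have := j.isLt; omega⟩)
      else
        gXXZ γ v w i (u ⟨N - 1 - (j : ℕ), by have := j.isLt; omega⟩)) /
  ((∏ i : Fin n, ∏ j : Fin (N - n),
      Complex.sinh (u i - w ⟨j, by have := j.isLt; omega⟩)) *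
   (∏ i : Fin n, ∏ j ∈ Ioi i, Complex.sinh (u i - u j)) *
   (∏ i : Fin N, ∏ j ∈ Ioi i, Complex.sinh (v i - v j)) *
   (∏ i : Fin (N - n), ∏ j ∈ Ioi i,
      Complex.sinh (w ⟨j, by have := j.isLt; omega⟩ - w ⟨i, by have := i.isLt; omega⟩)))

theorem Fin.prod_Ioi_castSucc {M : Type*} [CommMonoid M] {n : ℕ} (f : Fin (n + 1) → M)
    (i : Fin n) : ∏ j ∈ Ioi i.castSucc, f j = (∏ j ∈ Ioi i, f j.castSucc) * f (last n) := by
  have hIoi : Ioi i.castSucc = insert (last n) ((Ioi i).map castSuccEmb) := by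
    ext j
    cases j using lastCases <;> simp [castSucc_lt_last, le_last]
  rw [hIoi, prod_insert (by simp), prod_map, mul_comm]
  rfl

theorem Fin.prod_prod_Ioi_castSucc {M : Type*} [CommMonoid M] {n : ℕ}
    (f : Fin (n + 1) → Fin (n + 1) → M) :
    ∏ i, ∏ j ∈ Ioi i, f i j =
      (∏ i : Fin n, ∏ j ∈ Ioi i, f i.castSucc j.castSucc) * ∏ i : Fin n, f i.castSucc (last n) := by
  simp only [prod_univ_castSucc (fun i => ∏ j ∈ Ioi i, f i j), prod_Ioi_castSucc, ← top_eq_last,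
    Ioi_top, prod_empty, mul_one, prod_mul_distrib]

section CrossVandermonde

variable {α β : Type*} [CommMonoid α]

/-- With `F a b = [a - b]`, this is the denominator of `S_n` without its `v`-factor. -/
def crossVandermonde (F : β → β → α) {n t : ℕ} (u : Fin n → β) (w : Fin t → β) : α :=
  (∏ i, ∏ j, F (u i) (w j)) * (∏ i, ∏ j ∈ Ioi i, F (u i) (u j)) *
    ∏ i, ∏ j ∈ Ioi i, F (w j) (w i)

theorem crossVandermonde_castSucc_of_last_eq (F : β → β → α) {m t : ℕ} (u : Fin (m + 1) → β)
    (w : Fin (t + 1) → β) (hu : u (Fin.last m) = w (Fin.last t)) :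
    crossVandermonde F u (w ∘ Fin.castSucc) = crossVandermonde F (u ∘ Fin.castSucc) w := by
  simp only [crossVandermonde, Function.comp_apply, Fin.prod_prod_Ioi_castSucc,
    Fin.prod_univ_castSucc (fun i => ∏ j : Fin t, F (u i) (w j.castSucc)),
    Fin.prod_univ_castSucc (fun j => F _ (w j)), prod_mul_distrib, hu]
  ac_rfl

theorem crossVandermonde_restrict_succ (F : β → β → α) {m M t s : ℕ} (u : Fin (m + 1) → β)
    (w : Fin M → β) (hs : s = t + 1) (hsM : s ≤ M) (hu : u (Fin.last m) = w ⟨t, by omega⟩) :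
    crossVandermonde F u (fun j : Fin t => w ⟨j, by omega⟩) =
      crossVandermonde F (u ∘ Fin.castSucc) (fun j : Fin s => w ⟨j, by omega⟩) := by
  subst hs
  exact crossVandermonde_castSucc_of_last_eq F u (fun j => w ⟨j, by omega⟩) hu

end CrossVandermonde

theorem Matrix.det_eq_mul_det_of_col_eq_smul {n R : Type*} [Fintype n] [DecidableEq n]
    [CommRing R] {A B : Matrix n n R} (j : n) (c : R) (hj : ∀ i, A i j = c * B i j)
    (hk : ∀ i k, k ≠ j → A i k = B i k) : A.det = c * B.det := by
  have hA : A = B.updateCol j (c • fun i => B i j) := by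
    ext i k
    rcases eq_or_ne k j with rfl | hkj
    · simp [hj]
    · simp [hk i k hkj, hkj]
  rw [hA, det_updateCol_smul, updateCol_eq_self]

theorem gXXZ_apply_eq_mul_fXXZ (γ : ℂ) {N M : ℕ} (v : Fin N → ℂ) (w : Fin M → ℂ) (i : Fin N)
    (j : Fin M) :
    gXXZ γ v w i (w j) = (∏ k, Complex.sinh (w j - w k + γ)) * fXXZ γ v i (w j) := by
  have hzero : ∏ k, Complex.sinh (w j - w k) = 0 :=
    prod_eq_zero (mem_univ j) (by simp)
  rw [gXXZ, fXXZ, hzero]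
  ring

/-- The matrix `M_n`, with `0`-indexed columns. -/
noncomputable def matrixXXZ (γ : ℂ) {N M n : ℕ} (v : Fin N → ℂ) (w : Fin M → ℂ)
    (u : Fin n → ℂ) (hNM : N ≤ M) : Matrix (Fin N) (Fin N) ℂ :=
  Matrix.of fun i j =>
    if h : (j : ℕ) < N - n then fXXZ γ v i (w ⟨j, by omega⟩)
    else gXXZ γ v w i (u ⟨N - 1 - j, by omega⟩)

theorem det_matrixXXZ_succ (γ : ℂ) {N M m : ℕ} (hNM : N ≤ M) (hm : m + 1 ≤ N)
    (v : Fin N → ℂ) (w : Fin M → ℂ) (u : Fin (m + 1) → ℂ)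
    (hu : u (Fin.last m) = w ⟨N - (m + 1), by omega⟩) :
    (matrixXXZ γ v w u hNM).det =
      (∏ k, Complex.sinh (w ⟨N - (m + 1), by omega⟩ - w k + γ)) *
        (matrixXXZ γ v w (u ∘ Fin.castSucc) hNM).det := by
  refine Matrix.det_eq_mul_det_of_col_eq_smul ⟨N - (m + 1), by omega⟩ _ (fun i => ?_)
    (fun i k hk => ?_)
  · have hlast : (⟨N - 1 - (N - (m + 1)), by omega⟩ : Fin (m + 1)) = Fin.last m :=
      Fin.ext (by simp; omega)
    simp only [matrixXXZ, Matrix.of_apply, lt_irrefl, dite_false, hlast, hu,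
      gXXZ_apply_eq_mul_fXXZ, show N - (m + 1) < N - m by omega, dite_true]
  · have hk' : (k : ℕ) ≠ N - (m + 1) := fun h => hk (Fin.ext h)
    by_cases hlt : (k : ℕ) < N - (m + 1)
    · simp only [matrixXXZ, Matrix.of_apply, hlt, show (k : ℕ) < N - m by omega, dite_true]
    · simp only [matrixXXZ, Matrix.of_apply, hlt, show ¬ (k : ℕ) < N - m by omega, dite_false]
      rfl

theorem SXXZ_eq_det_matrixXXZ_div (γ : ℂ) {N M n : ℕ} (v : Fin N → ℂ) (w : Fin M → ℂ)
    (u : Fin n → ℂ) (hn : n ≤ N) (hNM : N ≤ M) :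
    SXXZ γ v w u hn hNM =
      (∏ i, ∏ j, Complex.sinh (v i - w j)) * (matrixXXZ γ v w u hNM).det /
        (crossVandermonde (fun a b => Complex.sinh (a - b)) u
            (fun j : Fin (N - n) => w ⟨j, by omega⟩) *
          ∏ i, ∏ j ∈ Ioi i, Complex.sinh (v i - v j)) := by
  rw [SXXZ, matrixXXZ, crossVandermonde, mul_right_comm _ (∏ i, ∏ j ∈ Ioi i, _)]

/-- The recursion for the Bethe scalar product determinant expression: setting
`u_n = w_{Ñ+1}` (with `Ñ = N - n`) gives `S_n = ∏_{i=1}^M [w_{Ñ+1}-w_i+γ]·S_{n-1}`. -/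
theorem sXXZ_recursion (γ : ℂ) {m N M : ℕ} (hm : m + 1 ≤ N) (hNM : N ≤ M)
    (v : Fin N → ℂ) (w : Fin M → ℂ) (u : Fin (m + 1) → ℂ)
    (hu : u (Fin.last m) = w ⟨N - (m + 1), by omega⟩) :
    SXXZ γ v w u hm hNM =
      (∏ i, Complex.sinh (w ⟨N - (m + 1), by omega⟩ - w i + γ)) *
        SXXZ γ v w (u ∘ Fin.castSucc) (by omega) hNM := by
  rw [SXXZ_eq_det_matrixXXZ_div, SXXZ_eq_det_matrixXXZ_div, det_matrixXXZ_succ γ hNM hm v w u hu,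
    crossVandermonde_restrict_succ _ u w (by omega : N - m = N - (m + 1) + 1) (by omega) hu]
  ring
end
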